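/- (Correctness of the data-driven RCI construction) Let C ∈ ℝ^{n_c×n}, q ∈ ℝ^{n_c} and S(q) = { x ∈ ℝⁿ : C x ≤ q }. Suppose there are linear maps V¹,…,V^{v_s} : ℝ^{n_c} → ℝⁿ with S(q) = convexHull{ Vⁱq : i = 1,…,v_s }. Let 𝒳 = { x : H_x x ≤ h_x } and 𝒰 = { u : H_u u ≤ h_u } for given matrices/vectors H_x, h_x, H_u, h_u, let P = convexHull{p¹,…,p^{v_p}} ⊆ ℝ^s, let W ⊆ ℝⁿ be nonempty and compact with d ∈ ℝ^{n_c} defined by d_i = max{ (Cw)_i : w ∈ W }, and let ℳ ⊆ ℝ^{n×(n+m)s} be any set of matrices. Assume there exist u¹,…,u^{v_s} ∈ ℝ^m such that for all i ∈ {1,…,v_s}: H_x Vⁱq ≤ h_x and H_u uⁱ ≤ h_u, and for all i ∈ {1,…,v_s}, j ∈ {1,…,v_p} and all M ∈ ℳ: C · ( M·[pʲ⊗(Vⁱq); pʲ⊗uⁱ] ) ≤ q − d. Then: (a) S(q) ⊆ 𝒳, and (b) for every x ∈ S(q) there exists u ∈ 𝒰 such that for every p ∈ P, every M ∈ ℳ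 and every w ∈ W, M·[p⊗x; p⊗u] + w ∈ S(q). -/

import Mathlib

/-!
Both parts are convexity arguments. The constraint sets are polyhedra, hence convex, so the
vertex conditions pass to `S(q) = conv{Vⁱq}` and to convex combinations of the `uⁱ`. For
`x = ∑ λᵢ Vⁱq` take `u₀ = ∑ λᵢ uⁱ`: the successor `M·[p⊗x; p⊗u₀]` is bilinear in `p` and
`(x, u₀)`, so the tightened invariance condition at the vertex pairs propagates to
`p ∈ P`, giving `C·(M·[p⊗x; p⊗u₀]) ≤ q - d`; adding `C w ≤ d` yields the claim.
-/

open Matrix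

/-- Kronecker product of two (column) vectors: the entry of `vkron p x` at index `(j, i)`
is `p j * x i`. -/
def vkron {s a : ℕ} (p : Fin s → ℝ) (x : Fin a → ℝ) : Fin s × Fin a → ℝ :=
  fun ji => p ji.1 * x ji.2

open Set

theorem convex_setOf_mulVec_le {𝕜 ι κ : Type*} [Field 𝕜] [LinearOrder 𝕜] [IsStrictOrderedRing 𝕜]
    [Fintype κ] (A : Matrix ι κ 𝕜) (c : ι → 𝕜) : Convex 𝕜 {x | A *ᵥ x ≤ c} :=
  (convex_Iic c).linear_preimage A.mulVecLin

theorem mulVec_add_le_of_le_sub {R ι κ : Type*} [Ring R] [PartialOrder R] [IsOrderedRing R]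
    [Fintype κ] {A : Matrix ι κ R} {y w : κ → R} {c d : ι → R} (hy : A *ᵥ y ≤ c - d)
    (hw : A *ᵥ w ≤ d) : A *ᵥ (y + w) ≤ c := by
  rw [mulVec_add]
  exact (add_le_add hy hw).trans_eq (sub_add_cancel c d)

section ConvexHull

variable {𝕜 E F G ι : Type*} [Field 𝕜] [LinearOrder 𝕜]
  [AddCommGroup E] [Module 𝕜 E] [AddCommGroup F] [Module 𝕜 F] [AddCommGroup G] [Module 𝕜 G]

theorem exists_prodMk_mem_convexHull_range [IsStrictOrderedRing 𝕜] (v : ι → E) (u : ι → F)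
    {x : E} (hx : x ∈ convexHull 𝕜 (range v)) :
    ∃ y ∈ convexHull 𝕜 (range u), (x, y) ∈ convexHull 𝕜 (range fun i => (v i, u i)) := by
  have hv : range v = LinearMap.fst 𝕜 E F '' range fun i => (v i, u i) := by
    rw [← range_comp]; rfl
  rw [hv, ← LinearMap.image_convexHull] at hx
  obtain ⟨⟨x', y⟩, hxy, rfl⟩ := hx
  have hsub : range (fun i => (v i, u i)) ⊆ range v ×ˢ range u := by
    rintro _ ⟨i, rfl⟩
    exact ⟨mem_range_self i, mem_range_self i⟩
  refine ⟨y, ?_, hxy⟩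
  have hprod := convexHull_mono hsub hxy
  rw [convexHull_prod] at hprod
  exact hprod.2

theorem LinearMap.mem_of_mem_convexHull₂ (f : E →ₗ[𝕜] F →ₗ[𝕜] G) {s : Set E} {t : Set F}
    {T : Set G} (hT : Convex 𝕜 T) (h : ∀ a ∈ s, ∀ b ∈ t, f a b ∈ T) {a : E} {b : F}
    (ha : a ∈ convexHull 𝕜 s) (hb : b ∈ convexHull 𝕜 t) : f a b ∈ T := by
  have hs : ∀ b ∈ t, convexHull 𝕜 s ⊆ (f.flip b) ⁻¹' T := fun b hb =>
    convexHull_min (fun a ha => h a ha b hb) (hT.linear_preimage _)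
  exact convexHull_min (fun b hb => hs b hb ha) (hT.linear_preimage (f a)) hb

end ConvexHull

def kronStack (s n m : ℕ) :
    (Fin s → ℝ) →ₗ[ℝ] (Fin n → ℝ) × (Fin m → ℝ) →ₗ[ℝ] ((Fin s × Fin n) ⊕ (Fin s × Fin m) → ℝ) :=
  LinearMap.mk₂ ℝ (fun p xu => Sum.elim (vkron p xu.1) (vkron p xu.2))
    (fun p₁ p₂ xu => by ext (ji | ji) <;> simp [vkron, add_mul])
    (fun c p xu => by ext (ji | ji) <;> simp [vkron, mul_assoc])
    (fun p xu₁ xu₂ => by ext (ji | ji) <;> simp [vkron, mul_add])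
    (fun c p xu => by ext (ji | ji) <;> simp [vkron, mul_left_comm])

theorem data_driven_RCI_correctness_general {n m s nc vs vp nx nu : ℕ}
    (C : Matrix (Fin nc) (Fin n) ℝ) (q : Fin nc → ℝ)
    (S : Set (Fin n → ℝ)) (hSdef : S = {x | C *ᵥ x ≤ q})
    (V : Fin vs → ((Fin nc → ℝ) →ₗ[ℝ] (Fin n → ℝ)))
    (hSvert : S = convexHull ℝ (Set.range fun i => V i q))
    (Hx : Matrix (Fin nx) (Fin n) ℝ) (hx : Fin nx → ℝ)
    (Hu : Matrix (Fin nu) (Fin m) ℝ) (hu : Fin nu → ℝ)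
    (p : Fin vp → (Fin s → ℝ))
    (W : Set (Fin n → ℝ))
    (d : Fin nc → ℝ)
    (hd : ∀ i : Fin nc, IsGreatest ((fun w => (C *ᵥ w) i) '' W) (d i))
    (ℳ : Set (Matrix (Fin n) ((Fin s × Fin n) ⊕ (Fin s × Fin m)) ℝ))
    (u : Fin vs → (Fin m → ℝ))
    (hstate : ∀ i, Hx *ᵥ (V i q) ≤ hx)
    (hinput : ∀ i, Hu *ᵥ (u i) ≤ hu)
    (hinv : ∀ (i : Fin vs) (j : Fin vp), ∀ M ∈ ℳ,
      C *ᵥ (M *ᵥ Sum.elim (vkron (p j) (V i q)) (vkron (p j) (u i))) ≤ q - d) :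
    (S ⊆ {x | Hx *ᵥ x ≤ hx}) ∧
      ∀ x ∈ S, ∃ u₀ : Fin m → ℝ, Hu *ᵥ u₀ ≤ hu ∧
        ∀ p₀ ∈ convexHull ℝ (Set.range p), ∀ M ∈ ℳ, ∀ w ∈ W,
          M *ᵥ Sum.elim (vkron p₀ x) (vkron p₀ u₀) + w ∈ S := by
  subst hSvert
  refine ⟨convexHull_min (range_subset_iff.2 hstate) (convex_setOf_mulVec_le Hx hx), ?_⟩
  intro x hxS
  obtain ⟨u₀, hu₀, hxu₀⟩ := exists_prodMk_mem_convexHull_range (fun i => V i q) u hxS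
  refine ⟨u₀, convexHull_min (range_subset_iff.2 hinput) (convex_setOf_mulVec_le Hu hu) hu₀, ?_⟩
  intro p₀ hp₀ M hM w hw
  have hsucc : C *ᵥ (M *ᵥ Sum.elim (vkron p₀ x) (vkron p₀ u₀)) ≤ q - d := by
    refine (kronStack s n m).mem_of_mem_convexHull₂
      ((convex_setOf_mulVec_le C (q - d)).linear_preimage M.mulVecLin) ?_ hp₀ hxu₀
    rintro _ ⟨j, rfl⟩ _ ⟨i, rfl⟩
    exact hinv i j M hM
  rw [hSdef]
  exact mulVec_add_le_of_le_sub hsucc fun i => (hd i).2 ⟨w, hw, rfl⟩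

/-- Correctness of the data-driven RCI construction: if `S(q) = {x : C x ≤ q}` admits the
vertex representation `S(q) = conv{Vⁱ q}`, the vertices satisfy the state constraints, the
vertex inputs satisfy the input constraints, and the tightened invariance condition
`C·(M·[pʲ⊗(Vⁱq); pʲ⊗uⁱ]) ≤ q - d` holds for all vertices, parameter vertices and all
models `M ∈ ℳ`, then (a) `S(q) ⊆ 𝒳` and (b) for every `x ∈ S(q)` there is an admissible
input keeping the successor state in `S(q)` for every `p ∈ P`, `M ∈ ℳ`, `w ∈ W`. -/
theorem data_driven_RCI_correctness {n m s nc vs vp nx nu : ℕ}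
    (C : Matrix (Fin nc) (Fin n) ℝ) (q : Fin nc → ℝ)
    (S : Set (Fin n → ℝ)) (hSdef : S = {x | C *ᵥ x ≤ q})
    (V : Fin vs → ((Fin nc → ℝ) →ₗ[ℝ] (Fin n → ℝ)))
    (hSvert : S = convexHull ℝ (Set.range fun i => V i q))
    (Hx : Matrix (Fin nx) (Fin n) ℝ) (hx : Fin nx → ℝ)
    (Hu : Matrix (Fin nu) (Fin m) ℝ) (hu : Fin nu → ℝ)
    (p : Fin vp → (Fin s → ℝ))
    (W : Set (Fin n → ℝ)) (hWne : W.Nonempty) (hWc : IsCompact W)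
    (d : Fin nc → ℝ)
    (hd : ∀ i : Fin nc, IsGreatest ((fun w => (C *ᵥ w) i) '' W) (d i))
    (ℳ : Set (Matrix (Fin n) ((Fin s × Fin n) ⊕ (Fin s × Fin m)) ℝ))
    (u : Fin vs → (Fin m → ℝ))
    (hstate : ∀ i, Hx *ᵥ (V i q) ≤ hx)
    (hinput : ∀ i, Hu *ᵥ (u i) ≤ hu)
    (hinv : ∀ (i : Fin vs) (j : Fin vp), ∀ M ∈ ℳ,
      C *ᵥ (M *ᵥ Sum.elim (vkron (p j) (V i q)) (vkron (p j) (u i))) ≤ q - d) :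
    (S ⊆ {x | Hx *ᵥ x ≤ hx}) ∧
      ∀ x ∈ S, ∃ u₀ : Fin m → ℝ, Hu *ᵥ u₀ ≤ hu ∧
        ∀ p₀ ∈ convexHull ℝ (Set.range p), ∀ M ∈ ℳ, ∀ w ∈ W,
          M *ᵥ Sum.elim (vkron p₀ x) (vkron p₀ u₀) + w ∈ S :=
  data_driven_RCI_correctness_general C q S hSdef V hSvert Hx hx Hu hu p W d hd ℳ u hstate hinput
    hinv
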